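/- If u₀* ∈ H is the minimizer of J and ψ = ℒ*(ℒu₀* − u_T), then for μ-almost every x one has u₀*(x) = −sign(ψ(x)) · max((|ψ(x)| − β)/τ, 0), where sign(t) = t/|t| for t ≠ 0 and sign(0) = 0. -/

import Mathlib

open MeasureTheory

/-- The cost functional `J(u₀) = ½‖ℒu₀ − u_T‖² + (τ/2)‖u₀‖² + β∫|u₀| dμ` on `H = L²(μ; ℝ)`. -/
noncomputable def J {X : Type*} [MeasurableSpace X] (μ : Measure X)
    (L : Lp ℝ 2 μ →L[ℝ] Lp ℝ 2 μ) (uT : Lp ℝ 2 μ) (τ β : ℝ) (u₀ : Lp ℝ 2 μ) : ℝ :=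
  (1 / 2) * ‖L u₀ - uT‖ ^ 2 + (τ / 2) * ‖u₀‖ ^ 2 + β * ∫ x, |u₀ x| ∂μ

/-!
Put `ψ = ℒ*(ℒu₀* − u_T)` and `Φ(u) = ⟪ψ, u⟫ + (τ/2)‖u‖² + β∫|u|`. Expanding the square gives
`J(u) = J(u₀*) + Φ(u) − Φ(u₀*) + ½‖ℒ(u − u₀*)‖²`; since `Φ` is convex and the last term is
quadratic along the segment from `u₀*` to `u`, `u₀*` minimizes `Φ` itself. On the other hand `Φ`
integrates the pointwise costs `s ↦ ψ(x) s + (τ/2) s² + β|s|`, which are minimized, with a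
`τ`-strong-convexity margin, by the soft-thresholded value `w(x) = −S_β(ψ(x))/τ`. Hence
`Φ(w) + (τ/2)‖u₀* − w‖² ≤ Φ(u₀*) ≤ Φ(w)`, and `u₀* = w`.
-/

open Filter Topology Set

section Convex

variable {E F : Type*} [AddCommGroup E] [Module ℝ E] [SeminormedAddCommGroup F] [NormedSpace ℝ F]

theorem ConvexOn.le_of_forall_le_add_norm_sq {Φ : E → ℝ} (hΦ : ConvexOn ℝ univ Φ)
    (A : E →ₗ[ℝ] F) {x : E} (hx : ∀ y, Φ x ≤ Φ y + ‖A (y - x)‖ ^ 2) (y : E) : Φ x ≤ Φ y := by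
  set K := ‖A (y - x)‖ ^ 2
  have hsegment : ∀ t ∈ Ioc (0 : ℝ) 1, Φ x ≤ Φ y + t * K := by
    rintro t ⟨ht0, ht1⟩
    have hconv := hΦ.2 (mem_univ x) (mem_univ y) (sub_nonneg.2 ht1) ht0.le (sub_add_cancel 1 t)
    have hnear := hx ((1 - t) • x + t • y)
    rw [show (1 - t) • x + t • y - x = t • (y - x) by module, map_smul, norm_smul, mul_pow,
      Real.norm_eq_abs, sq_abs] at hnear
    simp only [smul_eq_mul] at hconv
    refine le_of_mul_le_mul_left ?_ ht0
    linarith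
  have hlim : Tendsto (fun t : ℝ => Φ y + t * K) (𝓝[>] 0) (𝓝 (Φ y)) := by
    have hcont : Continuous fun t : ℝ => Φ y + t * K := by fun_prop
    simpa using (hcont.tendsto 0).mono_left nhdsWithin_le_nhds
  exact ge_of_tendsto hlim (mem_of_superset (Ioc_mem_nhdsGT one_pos) hsegment)

end Convex

/-- Written with the clamp to `[-β, β]` rather than as `sign t * max (|t| - β) 0` so that its
Lipschitz continuity is compositional. -/
noncomputable def softThreshold (β t : ℝ) : ℝ := t - max (-β) (min t β)

section SoftThreshold
variable {β : ℝ}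

theorem lipschitzWith_softThreshold (β : ℝ) : LipschitzWith 2 (softThreshold β) := by
  have h := LipschitzWith.id.sub ((LipschitzWith.id.min_const β).const_max (-β))
  rwa [one_add_one_eq_two] at h

theorem softThreshold_zero (hβ : 0 ≤ β) : softThreshold β 0 = 0 := by
  simp [softThreshold, hβ]

theorem abs_sub_softThreshold_le (hβ : 0 ≤ β) (t : ℝ) : |t - softThreshold β t| ≤ β := by
  rw [softThreshold, sub_sub_cancel, abs_le]
  exact ⟨le_max_left _ _, max_le (by linarith) (min_le_right _ _)⟩

theorem sub_softThreshold_mul_softThreshold (hβ : 0 ≤ β) (t : ℝ) :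
    (t - softThreshold β t) * softThreshold β t = β * |softThreshold β t| := by
  rcases le_total t (-β) with h | h
  · rw [softThreshold, min_eq_left (by linarith), max_eq_left h, abs_of_nonpos (by linarith)]
    ring
  rcases le_total t β with h' | h'
  · rw [softThreshold, min_eq_left h', max_eq_right h]; simp
  · rw [softThreshold, min_eq_right h', max_eq_right (by linarith), abs_of_nonneg (by linarith)]
    ring

theorem softThreshold_eq_sign_mul (hβ : 0 ≤ β) (t : ℝ) :
    softThreshold β t = Real.sign t * max (|t| - β) 0 := by
  rcases lt_trichotomy t 0 with h | rfl | h
  · rw [Real.sign_of_neg h, abs_of_neg h, softThreshold, min_eq_left (by linarith)]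
    rcases le_total t (-β) with h' | h'
    · rw [max_eq_left h', max_eq_left (by linarith)]; ring
    · rw [max_eq_right h', max_eq_right (by linarith)]; ring
  · simp [softThreshold_zero hβ]
  · rw [Real.sign_of_pos h, abs_of_pos h, softThreshold]
    rcases le_total t β with h' | h'
    · rw [min_eq_left h', max_eq_right (by linarith), max_eq_right (by linarith)]; ring
    · rw [min_eq_right h', max_eq_right (by linarith), max_eq_left (by linarith)]; ring

theorem softThreshold_optimality {τ : ℝ} (hτ : 0 < τ) (hβ : 0 ≤ β) (p : ℝ) :
    |p + τ * (-softThreshold β p / τ)| ≤ β ∧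
      (p + τ * (-softThreshold β p / τ)) * (-softThreshold β p / τ)
        = -(β * |-softThreshold β p / τ|) := by
  have hcancel : p + τ * (-softThreshold β p / τ) = p - softThreshold β p := by
    field_simp; ring
  refine ⟨hcancel ▸ abs_sub_softThreshold_le hβ p, ?_⟩
  rw [hcancel, abs_div, abs_neg, abs_of_pos hτ, mul_div_assoc', mul_neg,
    sub_softThreshold_mul_softThreshold hβ, neg_div, mul_div_assoc]

end SoftThreshold

/-- The hypotheses say that `-(p + τ m)` is a subgradient of `β |·|` at `m`. -/
theorem add_sq_le_of_abs_add_mul_le {τ β p m : ℝ} (hg : |p + τ * m| ≤ β)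
    (hgm : (p + τ * m) * m = -(β * |m|)) (s : ℝ) :
    p * m + τ / 2 * m ^ 2 + β * |m| + τ / 2 * (s - m) ^ 2 ≤ p * s + τ / 2 * s ^ 2 + β * |s| := by
  have hsubgrad : -(β * |s|) ≤ (p + τ * m) * s := by
    calc -(β * |s|) ≤ -(|p + τ * m| * |s|) := by gcongr
      _ = -|(p + τ * m) * s| := by rw [abs_mul]
      _ ≤ (p + τ * m) * s := neg_abs_le _
  nlinarith

section L2
variable {X : Type*} [MeasurableSpace X] {μ : Measure X}

theorem L2.real_inner_eq_integral (f g : Lp ℝ 2 μ) : inner ℝ f g = ∫ x, f x * g x ∂μ := by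
  rw [L2.inner_def]
  simp only [Real.inner_apply]

theorem L2.integrable_mul (f g : Lp ℝ 2 μ) : Integrable (fun x => f x * g x) μ := by
  simpa only [Real.inner_apply] using L2.integrable_inner (𝕜 := ℝ) f g

theorem L2.norm_sq_eq_integral (f : Lp ℝ 2 μ) : ‖f‖ ^ 2 = ∫ x, f x ^ 2 ∂μ := by
  rw [← real_inner_self_eq_norm_sq, L2.real_inner_eq_integral]
  simp only [sq]

theorem Lp.integrable_abs [IsFiniteMeasure μ] {p : ENNReal} [Fact (1 ≤ p)] (f : Lp ℝ p μ) :
    Integrable (fun x => |f x|) μ :=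
  ((Lp.memLp f).integrable Fact.out).abs

theorem convexOn_integral_abs [IsFiniteMeasure μ] {p : ENNReal} [Fact (1 ≤ p)] :
    ConvexOn ℝ univ (fun f : Lp ℝ p μ => ∫ x, |f x| ∂μ) := by
  refine ⟨convex_univ, fun f _ g _ a b ha hb _ => ?_⟩
  calc ∫ x, |(a • f + b • g) x| ∂μ ≤ ∫ x, (a * |f x| + b * |g x|) ∂μ := by
        refine integral_mono_ae (Lp.integrable_abs _)
          (((Lp.integrable_abs f).const_mul a).add ((Lp.integrable_abs g).const_mul b)) ?_
        filter_upwards [Lp.coeFn_add (a • f) (b • g), Lp.coeFn_smul a f, Lp.coeFn_smul b g]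
          with x hfg hf hg
        simp only [hfg, Pi.add_apply, hf, hg, Pi.smul_apply, smul_eq_mul]
        calc |a * f x + b * g x| ≤ |a * f x| + |b * g x| := abs_add_le _ _
          _ = a * |f x| + b * |g x| := by rw [abs_mul, abs_mul, abs_of_nonneg ha, abs_of_nonneg hb]
    _ = a • ∫ x, |f x| ∂μ + b • ∫ x, |g x| ∂μ := by
        rw [integral_add ((Lp.integrable_abs f).const_mul a) ((Lp.integrable_abs g).const_mul b),
          integral_const_mul, integral_const_mul, smul_eq_mul, smul_eq_mul]

noncomputable def reducedCost (ψ : Lp ℝ 2 μ) (τ β : ℝ) (u : Lp ℝ 2 μ) : ℝ :=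
  inner ℝ ψ u + τ / 2 * ‖u‖ ^ 2 + β * ∫ x, |u x| ∂μ

variable {τ β : ℝ}

theorem convexOn_reducedCost [IsFiniteMeasure μ] (ψ : Lp ℝ 2 μ) (hτ : 0 ≤ τ) (hβ : 0 ≤ β) :
    ConvexOn ℝ univ (reducedCost ψ τ β) :=
  (((innerₛₗ ℝ ψ).convexOn convex_univ).add
    ((convexOn_univ_norm.pow (fun _ _ => norm_nonneg _) 2).smul (div_nonneg hτ zero_le_two))).add
    (convexOn_integral_abs.smul hβ)

theorem integrable_reducedCost_integrand [IsFiniteMeasure μ] (ψ u : Lp ℝ 2 μ) :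
    Integrable (fun x => ψ x * u x + τ / 2 * u x ^ 2 + β * |u x|) μ :=
  ((L2.integrable_mul ψ u).add ((Lp.memLp u).integrable_sq.const_mul _)).add
    ((Lp.integrable_abs u).const_mul β)

theorem reducedCost_eq_integral [IsFiniteMeasure μ] (ψ u : Lp ℝ 2 μ) :
    reducedCost ψ τ β u = ∫ x, (ψ x * u x + τ / 2 * u x ^ 2 + β * |u x|) ∂μ := by
  have hsq := (Lp.memLp u).integrable_sq.const_mul (τ / 2)
  rw [reducedCost, L2.real_inner_eq_integral, L2.norm_sq_eq_integral, ← integral_const_mul,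
    ← integral_const_mul, ← integral_add (L2.integrable_mul ψ u) hsq]
  exact (integral_add ((L2.integrable_mul ψ u).add hsq) ((Lp.integrable_abs u).const_mul β)).symm

theorem reducedCost_add_norm_sub_sq_le [IsFiniteMeasure μ] {ψ w : Lp ℝ 2 μ}
    (hw : ∀ᵐ x ∂μ, |ψ x + τ * w x| ≤ β ∧ (ψ x + τ * w x) * w x = -(β * |w x|))
    (u : Lp ℝ 2 μ) : reducedCost ψ τ β w + τ / 2 * ‖u - w‖ ^ 2 ≤ reducedCost ψ τ β u := by
  have hdist := (Lp.memLp (u - w)).integrable_sq.const_mul (τ / 2)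
  rw [reducedCost_eq_integral, reducedCost_eq_integral, L2.norm_sq_eq_integral,
    ← integral_const_mul, ← integral_add (integrable_reducedCost_integrand ψ w) hdist]
  refine integral_mono_ae ((integrable_reducedCost_integrand ψ w).add hdist)
    (integrable_reducedCost_integrand ψ u) ?_
  filter_upwards [hw, Lp.coeFn_sub u w] with x ⟨hg, hgm⟩ hsub
  simp only [hsub, Pi.sub_apply]
  exact add_sq_le_of_abs_add_mul_le hg hgm (u x)

theorem J_sub_reducedCost (L : Lp ℝ 2 μ →L[ℝ] Lp ℝ 2 μ) (uT u₀ u : Lp ℝ 2 μ) :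
    J μ L uT τ β u - reducedCost (L.adjoint (L u₀ - uT)) τ β u
      = J μ L uT τ β u₀ - reducedCost (L.adjoint (L u₀ - uT)) τ β u₀
        + 1 / 2 * ‖L (u - u₀)‖ ^ 2 := by
  have hnorm : ‖L u - uT‖ ^ 2 = ‖L u₀ - uT‖ ^ 2 + 2 * inner ℝ (L u₀ - uT) (L (u - u₀))
      + ‖L (u - u₀)‖ ^ 2 := by
    rw [← norm_add_sq_real, map_sub]
    congr 2
    abel
  rw [← ContinuousLinearMap.adjoint_inner_left, inner_sub_right] at hnorm
  simp only [J, reducedCost]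
  rw [hnorm]
  ring

end L2

/-- Soft-thresholding characterization of the minimizer: with `ψ = ℒ*(ℒu₀* − u_T)`,
for a.e. `x`, `u₀*(x) = −sign(ψ(x)) · max((|ψ(x)| − β)/τ, 0)`
(Real.sign satisfies `sign t = t/|t|` for `t ≠ 0` and `sign 0 = 0`). -/
theorem minimizer_soft_thresholding {X : Type*} [MeasurableSpace X] (μ : Measure X)
    [IsFiniteMeasure μ] (L : Lp ℝ 2 μ →L[ℝ] Lp ℝ 2 μ) (uT : Lp ℝ 2 μ)
    (τ β : ℝ) (hτ : 0 < τ) (hβ : 0 < β) (u₀star : Lp ℝ 2 μ)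
    (hmin : ∀ u₀ : Lp ℝ 2 μ, J μ L uT τ β u₀star ≤ J μ L uT τ β u₀)
    (ψ : Lp ℝ 2 μ) (hψ : ψ = L.adjoint (L u₀star - uT)) :
    ∀ᵐ x ∂μ, u₀star x = -Real.sign (ψ x) * max ((|ψ x| - β) / τ) 0 := by
  have hΦmin : ∀ u, reducedCost ψ τ β u₀star ≤ reducedCost ψ τ β u := by
    refine (convexOn_reducedCost ψ hτ.le hβ.le).le_of_forall_le_add_norm_sq
      (L : Lp ℝ 2 μ →ₗ[ℝ] Lp ℝ 2 μ) fun u => ?_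
    show reducedCost ψ τ β u₀star ≤ reducedCost ψ τ β u + ‖L (u - u₀star)‖ ^ 2
    have hJ := J_sub_reducedCost (τ := τ) (β := β) L uT u₀star u
    rw [← hψ] at hJ
    nlinarith [hmin u, sq_nonneg ‖L (u - u₀star)‖]
  set v := (lipschitzWith_softThreshold β).compLp (softThreshold_zero hβ.le) ψ
  set w := (-τ⁻¹) • v
  have hw : ∀ᵐ x ∂μ, w x = -softThreshold β (ψ x) / τ := by
    filter_upwards [Lp.coeFn_smul (-τ⁻¹) v,
      (lipschitzWith_softThreshold β).coeFn_compLp (softThreshold_zero hβ.le) ψ] with x hwx hvx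
    rw [hwx, Pi.smul_apply, hvx, Function.comp_apply, smul_eq_mul, neg_mul, neg_div,
      inv_mul_eq_div]
  have hstrong := reducedCost_add_norm_sub_sq_le
    (hw.mono fun x hx => hx ▸ softThreshold_optimality hτ hβ.le (ψ x)) u₀star
  have hdist : ‖u₀star - w‖ ^ 2 ≤ 0 := by nlinarith [hΦmin w]
  have heq : u₀star = w := by simpa [sub_eq_zero] using hdist.antisymm (sq_nonneg _)
  filter_upwards [hw] with x hx
  rw [heq, hx, softThreshold_eq_sign_mul hβ.le, neg_div, mul_div_assoc,
    ← max_div_div_right hτ.le, zero_div, neg_mul]
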